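/- Let t be a regular operator between Hilbert C*-modules E and F. Then t has closed range if and only if its adjoint t* has closed range. -/

import Mathlib

/- Framework: Hilbert C*-modules over a C*-algebra `A` (via Mathlib's `CStarModule`),
densely defined operators as `LinearPMap`s, `A`-valued orthogonality, adjoints,
regularity, graphs inside `E ⊕ F`. -/

open scoped InnerProductSpace RightActions WithCStarModule

namespace RegularOperators

/-- The `CStarModule` class as it stood in the older Mathlib (right `A`-modules, action of `Aᵐᵒᵖ`,
`⟪x, y <• a⟫ = ⟪x, y⟫ * a`); Mathlib's `CStarModule` is now a left module. -/
class RightCStarModule (A : outParam <| Type*) (E : Type*) [NonUnitalSemiring A] [StarRing A]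
    [Module ℂ A] [AddCommGroup E] [Module ℂ E] [PartialOrder A] [SMul Aᵐᵒᵖ E] [Norm A] [Norm E]
    extends Inner A E where
  inner_add_right {x} {y} {z} : inner x (y + z) = inner x y + inner x z
  inner_self_nonneg {x} : 0 ≤ inner x x
  inner_self {x} : inner x x = 0 ↔ x = 0
  inner_op_smul_right {a : A} {x y : E} : inner x (y <• a) = inner x y * a
  inner_smul_right_complex {z : ℂ} {x} {y} : inner x (z • y) = z • inner x y
  star_inner x y : star (inner x y) = inner y x
  norm_eq_sqrt_norm_inner_self x : ‖x‖ = √‖inner x x‖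

variable (A : Type*) [NonUnitalCStarAlgebra A] [PartialOrder A] [StarOrderedRing A]

section Defs

variable {E F : Type*}
  [NormedAddCommGroup E] [Module ℂ E] [SMul Aᵐᵒᵖ E] [RightCStarModule A E]
  [NormedAddCommGroup F] [Module ℂ F] [SMul Aᵐᵒᵖ F] [RightCStarModule A F]

/-- Orthogonal complement of a subset w.r.t. the `A`-valued inner product. -/
def ortho {X : Type*} [Inner A X] (S : Set X) : Set X := {y | ∀ u ∈ S, ⟪u, y⟫_A = 0}

/-- `S` is orthogonally complemented (an orthogonal summand): every element of `E`
decomposes as a sum of an element of `S` and an element of `S^⊥`. -/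
def OrthoComplemented (S : Set E) : Prop := ∀ z : E, ∃ u ∈ S, ∃ v ∈ ortho A S, z = u + v

/-- A partially defined operator is `A`-linear (for the right `A`-module action). -/
def AModuleMap (t : E →ₗ.[ℂ] F) : Prop :=
  ∀ (a : A) (x : t.domain), ∃ hx : (x : E) <• a ∈ t.domain, t ⟨(x : E) <• a, hx⟩ = (t x) <• a

/-- Kernel of a partially defined operator, as a subset of `E`. -/
def kerSet (t : E →ₗ.[ℂ] F) : Set E := {x | ∃ hx : x ∈ t.domain, t ⟨x, hx⟩ = 0}

/-- Range of a partially defined operator. -/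
def ranSet (t : E →ₗ.[ℂ] F) : Set F := {y | ∃ x : t.domain, t x = y}

/-- Domain of the adjoint: those `y` for which some `z` satisfies `⟪tx, y⟫ = ⟪x, z⟫`
for all `x` in the domain of `t`. -/
def adjDomain (t : E →ₗ.[ℂ] F) : Set F :=
  {y | ∃ z : E, ∀ x : t.domain, ⟪t x, y⟫_A = ⟪(x : E), z⟫_A}

/-- `s` is the adjoint operator `t*` of `t`. -/
structure IsAdjoint (t : E →ₗ.[ℂ] F) (s : F →ₗ.[ℂ] E) : Prop where
  dom : (s.domain : Set F) = adjDomain A t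
  inner_eq : ∀ (x : t.domain) (y : s.domain), ⟪t x, (y : F)⟫_A = ⟪(x : E), s y⟫_A

/-- The range of `1 + t*t` (where `s` plays the role of `t*`). -/
def onePlusRange (t : E →ₗ.[ℂ] F) (s : F →ₗ.[ℂ] E) : Set E :=
  {u | ∃ (x : t.domain) (h : t x ∈ s.domain), (x : E) + s ⟨t x, h⟩ = u}

/-- `t` is a regular operator with adjoint `s`: it is `A`-linear, densely defined,
closed, adjointable with densely defined adjoint, and `1 + t*t` has dense range. -/
structure IsRegular (t : E →ₗ.[ℂ] F) (s : F →ₗ.[ℂ] E) : Prop where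
  amod : AModuleMap A t
  denseDom : Dense (t.domain : Set E)
  closedGraph : IsClosed (t.graph : Set (E × F))
  adj : IsAdjoint A t s
  denseAdjDom : Dense (s.domain : Set F)
  denseOnePlusRange : Dense (onePlusRange t s)

/-- The graph of `t` inside the Hilbert `A`-module `E ⊕ F`. -/
instance prodInner : Inner A (C⋆ᵐᵒᵈ(A, E × F)) where
  inner x y := ⟪(WithCStarModule.equiv A (E × F) x).1, (WithCStarModule.equiv A (E × F) y).1⟫_A +
    ⟪(WithCStarModule.equiv A (E × F) x).2, (WithCStarModule.equiv A (E × F) y).2⟫_A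

def graphSet (t : E →ₗ.[ℂ] F) : Set (C⋆ᵐᵒᵈ(A, E × F)) :=
  {w | ∃ x : t.domain, WithCStarModule.equiv A (E × F) w = ((x : E), t x)}

/-- The range of `P_F ∘ P_{G(t)^⊥}`, i.e. the image of `G(t)^⊥ ⊆ E ⊕ F` under the
canonical projection onto `F`. -/
def pfRange (t : E →ₗ.[ℂ] F) : Set F :=
  {y | ∃ w ∈ ortho A (graphSet A t), (WithCStarModule.equiv A (E × F) w).2 = y}

end Defs

end RegularOperators

open RegularOperators
variable {A : Type*} [NonUnitalCStarAlgebra A] [PartialOrder A] [StarOrderedRing A]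
variable {E F : Type*}
  [NormedAddCommGroup E] [Module ℂ E] [SMul Aᵐᵒᵖ E] [RightCStarModule A E] [CompleteSpace E]
  [NormedAddCommGroup F] [Module ℂ F] [SMul Aᵐᵒᵖ F] [RightCStarModule A F] [CompleteSpace F]

/-!
If `ran t` is closed, the open mapping theorem for `G(t) → ran t` gives `C` with
`‖f‖ ≤ C ‖t* f‖` for `f ∈ ran t ∩ dom t*`, so `t*` maps `ran t ∩ dom t*` onto a closed set.
This set is all of `ran t*`: for `y ∈ dom t*` and small `λ > 0` solve `λ w + t t* w = y`; then
`y - λ w = t t* w` lies in `ran t` and `‖t* y - t* (y - λ w)‖ = λ ‖t* w‖ ≤ √λ ‖y‖`. The equation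
is solvable because `1 + t t*` is onto with an inverse of norm `≤ 1`, which makes
`v ↦ y + (1 - λ) (1 + t t*)⁻¹ v` a contraction.

Surjectivity of `1 + t t*`, and regularity of `t*` with adjoint `t` (which gives the converse),
come from `E ⊕ F = {(x - t* y, t x + y)}`. This set is closed because the map
`(x, y) ↦ (x - t* y, t x + y)` is bounded below on `G(t) × G(t*)`, as
`⟪x, x⟫ + ⟪t x, t x⟫ = ⟪x, x - t* y⟫ + ⟪t x, t x + y⟫`; and it is dense because it contains
`ran (1 + t* t) × {0}` and all `(-t* y, y)`.
-/

theorem AddMonoidHomClass.isClosed_range_of_bound {𝓕 V W : Type*} [NormedAddCommGroup V]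
    [CompleteSpace V] [NormedAddCommGroup W] [FunLike 𝓕 V W] [AddMonoidHomClass 𝓕 V W] (f : 𝓕)
    (hf : Continuous f) {K : NNReal} (h : ∀ v, ‖v‖ ≤ K * ‖f v‖) : IsClosed (Set.range f) :=
  (antilipschitz_of_bound f h).isClosed_range
    (uniformContinuous_addMonoidHom_of_continuous (f := AddMonoidHomClass.toAddMonoidHom f) hf)

theorem ContinuousLinearMap.exists_preimage_norm_le_of_isClosed_range {𝕜 V W : Type*}
    [NontriviallyNormedField 𝕜] [NormedAddCommGroup V] [NormedSpace 𝕜 V] [CompleteSpace V]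
    [NormedAddCommGroup W] [NormedSpace 𝕜 W] [CompleteSpace W] (f : V →L[𝕜] W)
    (hf : IsClosed (Set.range f)) :
    ∃ C > 0, ∀ v, ∃ v', f v' = f v ∧ ‖v'‖ ≤ C * ‖f v‖ := by
  let R := LinearMap.range (f : V →ₗ[𝕜] W)
  have : CompleteSpace R := by
    have hR : IsClosed (R : Set W) := hf
    exact hR.completeSpace_coe
  let g := f.codRestrict R (LinearMap.mem_range_self (f : V →ₗ[𝕜] W))
  have hg : Function.Surjective g := fun ⟨_, v, rfl⟩ => ⟨v, rfl⟩
  obtain ⟨C, hC0, hC⟩ := g.exists_preimage_norm_le hg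
  exact ⟨C, hC0, fun v => (hC (g v)).imp fun v' hv' => ⟨congrArg Subtype.val hv'.1, hv'.2⟩⟩

theorem LinearPMap.mk_mem_graph_iff {R E F : Type*} [Ring R] [AddCommGroup E] [Module R E]
    [AddCommGroup F] [Module R F] {f : E →ₗ.[R] F} {x : E} {y : F} :
    (x, y) ∈ f.graph ↔ ∃ hx : x ∈ f.domain, f ⟨x, hx⟩ = y :=
  ⟨fun h => ⟨LinearPMap.mem_domain_of_mem_graph h, ((LinearPMap.image_iff _).2 h).symm⟩,
    fun ⟨hx, h⟩ => (LinearPMap.image_iff hx).1 h.symm⟩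

namespace RegularOperators

namespace RightCStarModule

section Algebra

variable {A E : Type*} [NonUnitalRing A] [StarRing A] [Module ℂ A] [PartialOrder A] [Norm A]
  [AddCommGroup E] [Module ℂ E] [SMul Aᵐᵒᵖ E] [Norm E] [RightCStarModule A E]

theorem inner_add_left {x y z : E} : ⟪x + y, z⟫_A = ⟪x, z⟫_A + ⟪y, z⟫_A := by
  rw [← star_inner z, inner_add_right, star_add, star_inner, star_inner]

theorem inner_op_smul_left {a : A} {x y : E} : ⟪x <• a, y⟫_A = star a * ⟪x, y⟫_A := by
  rw [← star_inner y, inner_op_smul_right, star_mul, star_inner]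

theorem inner_smul_right_real {r : ℝ} {x y : E} : ⟪x, r • y⟫_A = r • ⟪x, y⟫_A := by
  rw [← Complex.coe_smul, inner_smul_right_complex, Complex.coe_smul]

variable [StarModule ℂ A]

theorem inner_smul_left_complex {z : ℂ} {x y : E} : ⟪z • x, y⟫_A = star z • ⟪x, y⟫_A := by
  rw [← star_inner y, inner_smul_right_complex, star_smul, star_inner]

variable (A E) in
def innerₛₗ : E →ₗ⋆[ℂ] E →ₗ[ℂ] A where
  toFun x :=
    { toFun := fun y => ⟪x, y⟫_A
      map_add' := fun _ _ => inner_add_right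
      map_smul' := fun _ _ => inner_smul_right_complex }
  map_add' _ _ := by ext; exact inner_add_left
  map_smul' _ _ := by ext; exact inner_smul_left_complex

theorem innerₛₗ_apply {x y : E} : innerₛₗ A E x y = ⟪x, y⟫_A := rfl

theorem inner_zero_left {x : E} : ⟪(0 : E), x⟫_A = 0 := by
  rw [← innerₛₗ_apply, map_zero, LinearMap.zero_apply]

theorem inner_zero_right {x : E} : ⟪x, (0 : E)⟫_A = 0 := by
  rw [← innerₛₗ_apply, map_zero]

theorem inner_sub_right {x y z : E} : ⟪x, y - z⟫_A = ⟪x, y⟫_A - ⟪x, z⟫_A := by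
  simp only [← innerₛₗ_apply, map_sub]

theorem inner_sub_left {x y z : E} : ⟪x - y, z⟫_A = ⟪x, z⟫_A - ⟪y, z⟫_A := by
  simp only [← innerₛₗ_apply, map_sub, LinearMap.sub_apply]

theorem inner_smul_left_real {r : ℝ} {x y : E} : ⟪r • x, y⟫_A = r • ⟪x, y⟫_A := by
  rw [← Complex.coe_smul, inner_smul_left_complex, Complex.star_def, Complex.conj_ofReal,
    Complex.coe_smul]

end Algebra

section Norm

variable {A E : Type*} [NonUnitalCStarAlgebra A] [PartialOrder A]
  [NormedAddCommGroup E] [Module ℂ E] [SMul Aᵐᵒᵖ E] [RightCStarModule A E]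

theorem norm_sq_eq {x : E} : ‖x‖ ^ 2 = ‖⟪x, x⟫_A‖ := by
  rw [norm_eq_sqrt_norm_inner_self (A := A) x, Real.sq_sqrt (norm_nonneg _)]

noncomputable abbrev normedSpace : NormedSpace ℂ E := .ofCore
  { norm_nonneg _ := norm_nonneg _
    norm_eq_zero_iff _ := norm_eq_zero
    norm_smul c x := by
      rw [norm_eq_sqrt_norm_inner_self (A := A) (c • x), norm_eq_sqrt_norm_inner_self (A := A) x,
        inner_smul_left_complex, inner_smul_right_complex, smul_smul, norm_smul, norm_mul,
        norm_star, Real.sqrt_mul (by positivity), Real.sqrt_mul_self (norm_nonneg _)]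
    norm_triangle x y := norm_add_le x y }

variable [StarOrderedRing A]

theorem inner_swap_mul_inner_le {x y : E} : ⟪y, x⟫_A * ⟪x, y⟫_A ≤ ‖x‖ ^ 2 • ⟪y, y⟫_A := by
  rcases eq_or_ne x 0 with rfl | hx
  · simp [inner_zero_left]
  -- expand `0 ≤ ⟪x <• a - ‖x‖² y, x <• a - ‖x‖² y⟫` and take `a = ⟪x, y⟫`
  have key (a : A) : 0 ≤ ‖x‖ ^ 2 • (star a * a) - ‖x‖ ^ 2 • (⟪y, x⟫_A * a)
      - ‖x‖ ^ 2 • (star a * ⟪x, y⟫_A) + ‖x‖ ^ 2 • (‖x‖ ^ 2 • ⟪y, y⟫_A) := by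
    calc (0 : A) ≤ ⟪x <• a - ‖x‖ ^ 2 • y, x <• a - ‖x‖ ^ 2 • y⟫_A := inner_self_nonneg
      _ = star a * ⟪x, x⟫_A * a - ‖x‖ ^ 2 • (⟪y, x⟫_A * a)
            - ‖x‖ ^ 2 • (star a * ⟪x, y⟫_A) + ‖x‖ ^ 2 • (‖x‖ ^ 2 • ⟪y, y⟫_A) := by
          simp only [inner_sub_right, inner_op_smul_right, inner_sub_left, inner_op_smul_left,
            inner_smul_left_real, inner_smul_right_real, smul_sub, smul_mul_assoc, mul_assoc,
            sub_mul]
          abel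
      _ ≤ _ := by
          gcongr
          calc star a * ⟪x, x⟫_A * a ≤ ‖⟪x, x⟫_A‖ • (star a * a) :=
                CStarAlgebra.star_left_conjugate_le_norm_smul (star_inner x x)
            _ = ‖x‖ ^ 2 • (star a * a) := by rw [norm_sq_eq]
  have := key ⟪x, y⟫_A
  simp only [star_inner, sub_self, zero_sub, le_neg_add_iff_add_le, add_zero] at this
  rwa [smul_le_smul_iff_of_pos_left (pow_pos (norm_pos_iff.mpr hx) _)] at this

theorem norm_inner_le {x y : E} : ‖⟪x, y⟫_A‖ ≤ ‖x‖ * ‖y‖ := by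
  have : ‖⟪x, y⟫_A‖ ^ 2 ≤ (‖x‖ * ‖y‖) ^ 2 :=
    calc ‖⟪x, y⟫_A‖ ^ 2 = ‖⟪y, x⟫_A * ⟪x, y⟫_A‖ := by
          rw [← star_inner x, CStarRing.norm_star_mul_self, pow_two]
      _ ≤ ‖‖x‖ ^ 2 • ⟪y, y⟫_A‖ := by
          refine CStarAlgebra.norm_le_norm_of_nonneg_of_le ?_ inner_swap_mul_inner_le
          rw [← star_inner x]
          exact star_mul_self_nonneg ⟪x, y⟫_A
      _ = (‖x‖ * ‖y‖) ^ 2 := by rw [norm_smul, ← norm_sq_eq (x := y)]; simp [mul_pow]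
  exact (pow_le_pow_iff_left₀ (norm_nonneg _) (by positivity) two_ne_zero).mp this

attribute [local instance] normedSpace

theorem continuous_inner {X : Type*} [TopologicalSpace X] {f g : X → E} (hf : Continuous f)
    (hg : Continuous g) : Continuous fun a => ⟪f a, g a⟫_A := by
  let L : E →L⋆[ℂ] E →L[ℂ] A :=
    LinearMap.mkContinuous₂ (innerₛₗ A E) 1 fun x y => by rw [one_mul]; exact norm_inner_le
  have hL : Continuous fun p : E × E => L p.1 p.2 := by fun_prop
  exact hL.comp (hf.prodMk hg)

theorem ext_inner_left_of_dense {D : Set E} (hD : Dense D) {x y : E}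
    (h : ∀ d ∈ D, ⟪d, x⟫_A = ⟪d, y⟫_A) : x = y := by
  have hcl : IsClosed {d : E | ⟪d, x - y⟫_A = 0} :=
    isClosed_eq (continuous_inner continuous_id continuous_const) continuous_const
  have hD_sub : D ⊆ {d | ⟪d, x - y⟫_A = 0} := fun d hd => by
    rw [Set.mem_ofPred_eq, inner_sub_right, h d hd, sub_self]
  exact sub_eq_zero.mp (inner_self.mp (hcl.closure_subset_iff.mpr hD_sub (hD (x - y))))

variable {F : Type*} [NormedAddCommGroup F] [Module ℂ F] [SMul Aᵐᵒᵖ F] [RightCStarModule A F]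

theorem max_norm_le_of_inner_self_add_inner_self_eq {u a : E} {v b : F}
    (h : ⟪u, u⟫_A + ⟪v, v⟫_A = ⟪u, a⟫_A + ⟪v, b⟫_A) : max ‖u‖ ‖v‖ ≤ ‖a‖ + ‖b‖ := by
  have hM_sq : max ‖u‖ ‖v‖ ^ 2 ≤ ‖⟪u, u⟫_A + ⟪v, v⟫_A‖ := by
    rcases max_choice ‖u‖ ‖v‖ with hM | hM <;> rw [hM, norm_sq_eq]
    · exact CStarAlgebra.norm_le_norm_of_nonneg_of_le inner_self_nonneg
        (le_add_of_nonneg_right inner_self_nonneg)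
    · exact CStarAlgebra.norm_le_norm_of_nonneg_of_le inner_self_nonneg
        (le_add_of_nonneg_left inner_self_nonneg)
  have : max ‖u‖ ‖v‖ ^ 2 ≤ max ‖u‖ ‖v‖ * (‖a‖ + ‖b‖) :=
    calc max ‖u‖ ‖v‖ ^ 2 ≤ ‖⟪u, a⟫_A + ⟪v, b⟫_A‖ := h ▸ hM_sq
      _ ≤ ‖u‖ * ‖a‖ + ‖v‖ * ‖b‖ := (norm_add_le _ _).trans (add_le_add norm_inner_le norm_inner_le)
      _ ≤ max ‖u‖ ‖v‖ * (‖a‖ + ‖b‖) := by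
        rw [mul_add]; gcongr; exacts [le_max_left _ _, le_max_right _ _]
  nlinarith [norm_nonneg a, norm_nonneg b, norm_nonneg u, le_max_left ‖u‖ ‖v‖]

end Norm

end RightCStarModule

open RightCStarModule

theorem ranSet_eq_image_snd_graph {E F : Type*} [NormedAddCommGroup E] [Module ℂ E]
    [NormedAddCommGroup F] [Module ℂ F] (t : E →ₗ.[ℂ] F) :
    ranSet t = Prod.snd '' (t.graph : Set (E × F)) := by
  ext y
  simp [ranSet]

section Adjoint

variable {A E F : Type*} [NonUnitalCStarAlgebra A] [PartialOrder A]
  [NormedAddCommGroup E] [Module ℂ E] [SMul Aᵐᵒᵖ E] [RightCStarModule A E]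
  [NormedAddCommGroup F] [Module ℂ F] [SMul Aᵐᵒᵖ F] [RightCStarModule A F]
  {t : E →ₗ.[ℂ] F} {s : F →ₗ.[ℂ] E}

variable (A) in
def adjointGraph (t : E →ₗ.[ℂ] F) : Set (F × E) :=
  {q | ∀ p ∈ t.graph, ⟪p.2, q.1⟫_A = ⟪p.1, q.2⟫_A}

theorem IsAdjoint.inner_graph (h : IsAdjoint A t s) {p : E × F} {q : F × E} (hp : p ∈ t.graph)
    (hq : q ∈ s.graph) : ⟪p.2, q.1⟫_A = ⟪p.1, q.2⟫_A := by
  obtain ⟨x, rfl⟩ := t.mem_graph_iff'.1 hp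
  obtain ⟨y, rfl⟩ := s.mem_graph_iff'.1 hq
  exact h.inner_eq x y

theorem IsAdjoint.inner_graph_symm (h : IsAdjoint A t s) {p : E × F} {q : F × E}
    (hp : p ∈ t.graph) (hq : q ∈ s.graph) : ⟪q.1, p.2⟫_A = ⟪q.2, p.1⟫_A := by
  rw [← star_inner p.2, h.inner_graph hp hq, star_inner]

theorem isAdjoint_of_graph_eq (h : (s.graph : Set (F × E)) = adjointGraph A t) :
    IsAdjoint A t s := by
  have hmem (q : F × E) : q ∈ s.graph ↔ q ∈ adjointGraph A t := Set.ext_iff.1 h q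
  refine ⟨?_, fun x y => (hmem _).1 (s.mem_graph y) _ (t.mem_graph x)⟩
  ext y
  refine ⟨fun hy => ⟨s ⟨y, hy⟩, fun x => (hmem _).1 (s.mem_graph ⟨y, hy⟩) _ (t.mem_graph x)⟩,
    fun ⟨z, hz⟩ => LinearPMap.mem_domain_of_mem_graph ((hmem (y, z)).2 fun p hp => ?_)⟩
  obtain ⟨x, rfl⟩ := t.mem_graph_iff'.1 hp
  exact hz x

variable [StarOrderedRing A]

theorem isClosed_adjointGraph (t : E →ₗ.[ℂ] F) : IsClosed (adjointGraph A t) := by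
  simp only [adjointGraph, Set.ofPred_forall]
  exact isClosed_iInter fun p => isClosed_iInter fun _ =>
    isClosed_eq (RightCStarModule.continuous_inner continuous_const continuous_fst)
      (RightCStarModule.continuous_inner continuous_const continuous_snd)

theorem IsAdjoint.graph_eq (h : IsAdjoint A t s) (hd : Dense (t.domain : Set E)) :
    (s.graph : Set (F × E)) = adjointGraph A t := by
  ext ⟨y, z⟩
  refine ⟨fun hq p hp => h.inner_graph hp hq, fun hq => ?_⟩
  have hy : y ∈ s.domain := by
    rw [← SetLike.mem_coe, h.dom]
    exact ⟨z, fun x => hq _ (t.mem_graph x)⟩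
  refine LinearPMap.mk_mem_graph_iff.2 ⟨hy, ext_inner_left_of_dense hd fun x hx => ?_⟩
  rw [← h.inner_eq ⟨x, hx⟩ ⟨y, hy⟩]
  exact hq _ (t.mem_graph ⟨x, hx⟩)

theorem IsAdjoint.isClosed_graph (h : IsAdjoint A t s) (hd : Dense (t.domain : Set E)) :
    IsClosed (s.graph : Set (F × E)) :=
  h.graph_eq hd ▸ isClosed_adjointGraph t

theorem IsAdjoint.norm_le_of_mem_graph (h : IsAdjoint A t s) {p : E × F} {q : F × E}
    (hp : p ∈ t.graph) (hq : q ∈ s.graph) :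
    max ‖p‖ ‖q‖ ≤ ‖p.1 - q.2‖ + ‖p.2 + q.1‖ := by
  refine max_le (max_norm_le_of_inner_self_add_inner_self_eq ?_) ?_
  · rw [RightCStarModule.inner_sub_right, RightCStarModule.inner_add_right,
      h.inner_graph hp hq]
    abel
  · rw [add_comm ‖p.1 - q.2‖, ← norm_neg (p.1 - q.2), neg_sub]
    refine max_norm_le_of_inner_self_add_inner_self_eq ?_
    rw [RightCStarModule.inner_sub_right, RightCStarModule.inner_add_right,
      h.inner_graph_symm hp hq]
    abel

end Adjoint

section Regular

attribute [local instance] RightCStarModule.normedSpace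

variable {t : E →ₗ.[ℂ] F} {s : F →ₗ.[ℂ] E}

theorem IsRegular.exists_graph_decomposition (ht : IsRegular A t s) (e : E) (f : F) :
    ∃ p ∈ t.graph, ∃ q ∈ s.graph, e = p.1 - q.2 ∧ f = p.2 + q.1 := by
  have : CompleteSpace t.graph := ht.closedGraph.completeSpace_coe
  have : CompleteSpace s.graph := (ht.adj.isClosed_graph ht.denseDom).completeSpace_coe
  let L : t.graph × s.graph →+ E × F := AddMonoidHom.mk'
    (fun pq => ((pq.1 : E × F).1 - (pq.2 : F × E).2, (pq.1 : E × F).2 + (pq.2 : F × E).1))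
    (fun _ _ => by ext <;> simp only [Prod.fst_add, Prod.snd_add, Submodule.coe_add] <;> abel)
  have hL_closed : IsClosed (Set.range L) := by
    have hL_cont : Continuous L := by
      change Continuous fun pq : t.graph × s.graph =>
        ((pq.1 : E × F).1 - (pq.2 : F × E).2, (pq.1 : E × F).2 + (pq.2 : F × E).1)
      fun_prop
    refine AddMonoidHomClass.isClosed_range_of_bound L hL_cont (K := 2) fun pq => ?_
    calc ‖pq‖ ≤ ‖(L pq).1‖ + ‖(L pq).2‖ := ht.adj.norm_le_of_mem_graph pq.1.2 pq.2.2
      _ ≤ ‖L pq‖ + ‖L pq‖ := add_le_add (norm_fst_le _) (norm_snd_le _)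
      _ = 2 * ‖L pq‖ := by ring
  have hL_dense : Dense (Set.range L) := by
    rw [← dense_closure]
    refine (dense_univ.prod ht.denseAdjDom).mono ?_
    rintro ⟨e, y⟩ ⟨-, hy⟩
    have hmaps : Set.MapsTo (fun u => (u - s ⟨y, hy⟩, y)) (onePlusRange t s) (Set.range L) := by
      rintro _ ⟨x, hx, rfl⟩
      refine ⟨(⟨_, t.mem_graph x⟩, ⟨_, sub_mem (s.mem_graph ⟨y, hy⟩) (s.mem_graph ⟨t x, hx⟩)⟩), ?_⟩
      ext <;> simp only [L, AddMonoidHom.mk'_apply, Prod.mk_sub_mk, add_sub_cancel]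
      abel
    simpa using map_mem_closure (by fun_prop) (ht.denseOnePlusRange (e + s ⟨y, hy⟩)) hmaps
  obtain ⟨⟨p, q⟩, hpq⟩ : (e, f) ∈ Set.range L := by
    rw [← hL_closed.closure_eq, hL_dense.closure_eq]
    trivial
  exact ⟨p, p.2, q, q.2, (congrArg Prod.fst hpq).symm, (congrArg Prod.snd hpq).symm⟩

/-- Surjectivity of `1 + t t*`, with `q = (w, t* w)` and `p = (t* w, t t* w)`. -/
theorem IsRegular.exists_mem_graph_add_eq (ht : IsRegular A t s) (f : F) :
    ∃ q ∈ s.graph, ∃ p ∈ t.graph, p.1 = q.2 ∧ q.1 + p.2 = f := by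
  obtain ⟨p, hp, q, hq, he, hf⟩ := ht.exists_graph_decomposition 0 f
  exact ⟨q, hq, p, hp, (sub_eq_zero.1 he.symm), by rw [hf, add_comm]⟩

theorem IsRegular.graph_eq_adjointGraph (ht : IsRegular A t s) :
    (t.graph : Set (E × F)) = adjointGraph A s := by
  ext p
  refine ⟨fun hp q hq => (ht.adj.inner_graph_symm hp hq).symm, fun hp => ?_⟩
  obtain ⟨p', hp', q, hq, he, hf⟩ := ht.exists_graph_decomposition p.1 p.2
  -- `p - p' = (-q.2, q.1)` is adjoint-related to `q`, which forces `⟪q.1, q.1⟫ + ⟪q.2, q.2⟫ = 0`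
  have hrel := hp q hq
  rw [he, hf, RightCStarModule.inner_sub_right, RightCStarModule.inner_add_right,
    ← ht.adj.inner_graph_symm hp' hq, sub_eq_add_neg, add_right_inj] at hrel
  obtain ⟨h1, h2⟩ := (add_eq_zero_iff_of_nonneg RightCStarModule.inner_self_nonneg
      RightCStarModule.inner_self_nonneg).1
    (show ⟪q.1, q.1⟫_A + ⟪q.2, q.2⟫_A = 0 by rw [← hrel, neg_add_cancel])
  rw [RightCStarModule.inner_self] at h1 h2
  have : p = p' := Prod.ext (by rw [he, h2, sub_zero]) (by rw [hf, h1, add_zero])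
  exact this ▸ hp'

theorem IsRegular.symm (ht : IsRegular A t s) : IsRegular A s t where
  amod a y := by
    refine LinearPMap.mk_mem_graph_iff.1 ?_
    rw [← SetLike.mem_coe, ht.adj.graph_eq ht.denseDom]
    intro p hp
    rw [RightCStarModule.inner_op_smul_right, RightCStarModule.inner_op_smul_right,
      ht.adj.inner_graph hp (s.mem_graph y)]
  denseDom := ht.denseAdjDom
  closedGraph := ht.adj.isClosed_graph ht.denseDom
  adj := isAdjoint_of_graph_eq ht.graph_eq_adjointGraph
  denseAdjDom := ht.denseDom
  denseOnePlusRange := by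
    refine dense_univ.mono fun f _ => ?_
    obtain ⟨q, hq, p, hp, hpq, rfl⟩ := ht.exists_mem_graph_add_eq f
    obtain ⟨y, rfl⟩ := s.mem_graph_iff'.1 hq
    obtain ⟨x, rfl⟩ := t.mem_graph_iff'.1 hp
    have hxy : (x : E) = s y := hpq
    have hsy : s y ∈ t.domain := hxy ▸ x.2
    have hx : (⟨s y, hsy⟩ : t.domain) = x := Subtype.ext hxy.symm
    exact ⟨y, hsy, by rw [hx]⟩

theorem IsRegular.exists_mem_graph_smul_add_eq (ht : IsRegular A t s) {c : ℝ} (hc0 : 0 < c)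
    (hc1 : c ≤ 1) (f : F) : ∃ q ∈ s.graph, ∃ p ∈ t.graph, p.1 = q.2 ∧ c • q.1 + p.2 = f := by
  choose Q hQ P hP hPQ hQP using ht.exists_mem_graph_add_eq
  have hQ_lip (v w : F) : ‖(Q v).1 - (Q w).1‖ ≤ ‖v - w‖ :=
    calc ‖(Q v).1 - (Q w).1‖ ≤ ‖Q v - Q w‖ := norm_fst_le (Q v - Q w)
      _ ≤ ‖(P v - P w).1 - (Q v - Q w).2‖ + ‖(P v - P w).2 + (Q v - Q w).1‖ :=
        (le_max_right _ _).trans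
          (ht.adj.norm_le_of_mem_graph (sub_mem (hP v) (hP w)) (sub_mem (hQ v) (hQ w)))
      _ = ‖v - w‖ := by
        simp only [Prod.fst_sub, Prod.snd_sub, hPQ, sub_self, norm_zero, zero_add]
        congr 1
        linear_combination (norm := module) hQP v - hQP w
  let K : NNReal := ⟨1 - c, by linarith⟩
  have hK : (K : ℝ) = 1 - c := rfl
  have hΦ : ContractingWith K fun v => f + (1 - c) • (Q v).1 := by
    refine ⟨by rw [← NNReal.coe_lt_coe, hK, NNReal.coe_one]; linarith,
      LipschitzWith.of_dist_le_mul fun v w => ?_⟩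
    rw [dist_eq_norm, dist_eq_norm, add_sub_add_left_eq_sub, ← smul_sub, norm_smul,
      Real.norm_of_nonneg (by linarith), hK]
    exact mul_le_mul_of_nonneg_left (hQ_lip v w) (by linarith)
  set v := ContractingWith.fixedPoint _ hΦ
  have hv : f + (1 - c) • (Q v).1 = v := hΦ.fixedPoint_isFixedPt
  refine ⟨Q v, hQ v, P v, hP v, hPQ v, ?_⟩
  linear_combination (norm := module) hQP v - hv

theorem IsRegular.snd_mem_closure (ht : IsRegular A t s) {q : F × E} (hq : q ∈ s.graph) :
    q.2 ∈ closure (Prod.snd '' ((s.graph : Set (F × E)) ∩ Prod.fst ⁻¹' ranSet t)) := by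
  rw [Metric.mem_closure_iff]
  intro ε hε
  set μ := ε / (‖q.1‖ + ε)
  have hμ0 : 0 < μ := by positivity
  have hμ1 : μ ≤ 1 := div_le_one_of_le₀ (by linarith [norm_nonneg q.1]) (by positivity)
  have hμq : μ * ‖q.1‖ < ε := by
    rw [div_mul_eq_mul_div, div_lt_iff₀ (by positivity)]
    nlinarith [norm_nonneg q.1]
  obtain ⟨r, hr, p, hp, hpr, hrp⟩ :=
    ht.exists_mem_graph_smul_add_eq (pow_pos hμ0 2) (pow_le_one₀ hμ0.le hμ1) q.1
  have hr_le : μ * ‖r.2‖ ≤ ‖q.1‖ := by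
    have := max_norm_le_of_inner_self_add_inner_self_eq (u := μ • r.1) (v := r.2)
      (a := μ⁻¹ • q.1) (b := (0 : E)) (by
        have hμμ : μ⁻¹ * μ ^ 2 = μ := by field_simp
        have hcross : ⟪μ • r.1, μ⁻¹ • p.2⟫_A = ⟪r.2, r.2⟫_A := by
          rw [inner_smul_left_real, inner_smul_right_real, smul_smul, mul_inv_cancel₀ hμ0.ne',
            one_smul, ht.adj.inner_graph_symm hp hr, hpr]
        rw [← hrp, smul_add, smul_smul, hμμ, RightCStarModule.inner_add_right, hcross,
          RightCStarModule.inner_zero_right, add_zero])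
    rw [norm_zero, add_zero, norm_smul μ⁻¹, Real.norm_of_nonneg (inv_nonneg.2 hμ0.le)] at this
    rw [← le_div_iff₀' hμ0, div_eq_inv_mul]
    exact (le_max_right _ _).trans this
  refine ⟨(q - μ ^ 2 • r).2, ⟨q - μ ^ 2 • r, ⟨sub_mem hq (Submodule.smul_mem _ _ hr), ?_⟩, rfl⟩, ?_⟩
  · have : (q - μ ^ 2 • r).1 = p.2 := by
      rw [Prod.fst_sub, Prod.smul_fst, ← hrp]
      abel
    rw [Set.mem_preimage, this, ranSet_eq_image_snd_graph]
    exact ⟨p, hp, rfl⟩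
  · rw [dist_eq_norm, Prod.snd_sub, sub_sub_cancel, Prod.smul_snd, norm_smul,
      Real.norm_of_nonneg (by positivity)]
    calc μ ^ 2 * ‖r.2‖ = μ * (μ * ‖r.2‖) := by ring
      _ ≤ μ * ‖q.1‖ := by gcongr
      _ < ε := hμq

theorem IsRegular.exists_norm_le_norm_adjoint (ht : IsRegular A t s)
    (hR : IsClosed (ranSet t)) :
    ∃ C > 0, ∀ q ∈ s.graph, q.1 ∈ ranSet t → ‖q.1‖ ≤ C * ‖q.2‖ := by
  have : CompleteSpace t.graph := ht.closedGraph.completeSpace_coe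
  let π : t.graph →L[ℂ] F := (ContinuousLinearMap.snd ℂ E F).comp t.graph.subtypeL
  have hπ : Set.range π = ranSet t := by
    rw [ranSet_eq_image_snd_graph]
    ext y
    simp [π]
  obtain ⟨C, hC0, hC⟩ := π.exists_preimage_norm_le_of_isClosed_range (hπ ▸ hR)
  refine ⟨C, hC0, fun q hq hq1 => ?_⟩
  rw [ranSet_eq_image_snd_graph] at hq1
  obtain ⟨p, hp, hpq⟩ := hq1
  obtain ⟨p', hp'q, hp'⟩ := hC ⟨p, hp⟩
  replace hp'q : (p' : E × F).2 = q.1 := hp'q.trans hpq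
  replace hp' : ‖(p' : E × F).1‖ ≤ C * ‖q.1‖ := (norm_fst_le _).trans (hpq ▸ hp')
  -- `q.1 = t x'` with `‖x'‖ ≤ C ‖q.1‖`, and `‖q.1‖² = ‖⟪t x', q.1⟫‖ = ‖⟪x', s q.1⟫‖`
  have key : ‖q.1‖ ^ 2 ≤ ‖q.1‖ * (C * ‖q.2‖) :=
    calc ‖q.1‖ ^ 2 = ‖⟪(p' : E × F).2, q.1⟫_A‖ := by rw [hp'q, norm_sq_eq]
      _ = ‖⟪(p' : E × F).1, q.2⟫_A‖ := by rw [ht.adj.inner_graph p'.2 hq]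
      _ ≤ ‖(p' : E × F).1‖ * ‖q.2‖ := norm_inner_le
      _ ≤ C * ‖q.1‖ * ‖q.2‖ := by gcongr
      _ = ‖q.1‖ * (C * ‖q.2‖) := by ring
  nlinarith [norm_nonneg q.1, mul_nonneg hC0.le (norm_nonneg q.2)]

theorem IsRegular.isClosed_image_adjoint (ht : IsRegular A t s) (hR : IsClosed (ranSet t)) :
    IsClosed (Prod.snd '' ((s.graph : Set (F × E)) ∩ Prod.fst ⁻¹' ranSet t)) := by
  obtain ⟨C, hC0, hC⟩ := ht.exists_norm_le_norm_adjoint hR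
  let W : Submodule ℂ (F × E) :=
    s.graph ⊓ (LinearMap.range t.toFun).comap (LinearMap.fst ℂ F E)
  have : CompleteSpace W :=
    ((ht.adj.isClosed_graph ht.denseDom).inter (hR.preimage continuous_fst)).completeSpace_coe
  let g : W →+ E := (LinearMap.snd ℂ F E ∘ₗ W.subtype).toAddMonoidHom
  have hg : Set.range g = Prod.snd '' ((s.graph : Set (F × E)) ∩ Prod.fst ⁻¹' ranSet t) := by
    ext y
    simp [g, W, ranSet]
  rw [← hg]
  refine AddMonoidHomClass.isClosed_range_of_bound g (continuous_snd.comp continuous_subtype_val)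
    (K := ⟨C + 1, by positivity⟩) fun w => ?_
  have hw := hC _ w.2.1 w.2.2
  change max ‖(w : F × E).1‖ ‖(w : F × E).2‖ ≤ (C + 1) * ‖(w : F × E).2‖
  refine max_le (hw.trans ?_) ?_ <;> nlinarith [norm_nonneg (w : F × E).2]

theorem IsRegular.isClosed_ranSet_adjoint (ht : IsRegular A t s) (hR : IsClosed (ranSet t)) :
    IsClosed (ranSet s) := by
  have hK := ht.isClosed_image_adjoint hR
  suffices ranSet s = Prod.snd '' ((s.graph : Set (F × E)) ∩ Prod.fst ⁻¹' ranSet t) by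
    rwa [this]
  rw [ranSet_eq_image_snd_graph]
  refine (Set.image_mono Set.inter_subset_left).antisymm' ?_
  rintro _ ⟨q, hq, rfl⟩
  exact hK.closure_subset (ht.snd_mem_closure hq)

end Regular

end RegularOperators

/-- a regular operator `t` has closed range iff its adjoint `t* = s`
has closed range. -/
theorem ranSet_isClosed_iff_ranSet_adjoint_isClosed (t : E →ₗ.[ℂ] F) (s : F →ₗ.[ℂ] E)
    (ht : IsRegular A t s) : IsClosed (ranSet t) ↔ IsClosed (ranSet s) :=
  ⟨ht.isClosed_ranSet_adjoint, ht.symm.isClosed_ranSet_adjoint⟩
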